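/- arXiv:2105.00621 — 5 statements merged into one kernel-verified Lean document; each statement's English description precedes it below -/
import Mathlib

section
/- Let Γ = (N, γ) be a cooperative game admitting a population monotonic allocation scheme (PMAS). Then for any three distinct players 1, 2, 3 ∈ N, we have 2·γ({1,2,3}) ≥ γ({1,2}) + γ({1,3}) + γ({2,3}). -/
/-!
By monotonicity, each pair's worth is at most what its two members receive in the triple
`T = {i, j, k}`. Each player of `T` lies in exactly two of the three pairs, so the three pair
worths add up to at most twice the total payoff in `T`, which is `2 γ T` by efficiency.
-/

open Finset

/-- A population monotonic allocation scheme (PMAS): `x S i` is the payoff of player `i`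
in coalition `S`.  Efficiency holds for every nonempty coalition, and every player's
payoff is monotone under coalition inclusion. -/
def IsPMAS {N : Type*} [DecidableEq N] (γ : Finset N → ℝ)
    (x : Finset N → N → ℝ) : Prop :=
  (∀ S : Finset N, S.Nonempty → ∑ i ∈ S, x S i = γ S) ∧
  (∀ S T : Finset N, S ⊆ T → ∀ i ∈ S, x S i ≤ x T i)

namespace IsPMAS

variable {N : Type*} [DecidableEq N] {γ : Finset N → ℝ} {x : Finset N → N → ℝ}

theorem le_sum_of_subset (hx : IsPMAS γ x) {S T : Finset N} (hS : S.Nonempty) (hST : S ⊆ T) :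
    γ S ≤ ∑ i ∈ S, x T i := by
  rw [← hx.1 S hS]
  exact sum_le_sum fun i hi => hx.2 S T hST i hi

theorem pair_le (hx : IsPMAS γ x) {T : Finset N} {i j : N} (hij : i ≠ j) (hi : i ∈ T)
    (hj : j ∈ T) : γ {i, j} ≤ x T i + x T j := by
  have h := hx.le_sum_of_subset (insert_nonempty i {j})
    (insert_subset hi (singleton_subset_iff.2 hj))
  rwa [sum_pair hij] at h

theorem triple_eq (hx : IsPMAS γ x) {i j k : N} (hij : i ≠ j) (hik : i ≠ k) (hjk : j ≠ k) :
    γ {i, j, k} = x {i, j, k} i + x {i, j, k} j + x {i, j, k} k := by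
  rw [← hx.1 _ (insert_nonempty i {j, k}), sum_insert (by simp [hij, hik]), sum_pair hjk,
    add_assoc]

end IsPMAS

theorem pmas_triangle_inequality_general {N : Type*} [DecidableEq N]
    (γ : Finset N → ℝ)
    (hpmas : ∃ x : Finset N → N → ℝ, IsPMAS γ x)
    (i j k : N) (hij : i ≠ j) (hik : i ≠ k) (hjk : j ≠ k) :
    2 * γ {i, j, k} ≥ γ {i, j} + γ {i, k} + γ {j, k} := by
  obtain ⟨x, hx⟩ := hpmas
  have hi : i ∈ ({i, j, k} : Finset N) := by simp
  have hj : j ∈ ({i, j, k} : Finset N) := by simp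
  have hk : k ∈ ({i, j, k} : Finset N) := by simp
  have hγij := hx.pair_le hij hi hj
  have hγik := hx.pair_le hik hi hk
  have hγjk := hx.pair_le hjk hj hk
  rw [hx.triple_eq hij hik hjk]
  linarith

theorem pmas_triangle_inequality {N : Type*} [Fintype N] [DecidableEq N]
    (γ : Finset N → ℝ) (hγ0 : γ ∅ = 0)
    (hpmas : ∃ x : Finset N → N → ℝ, IsPMAS γ x)
    (i j k : N) (hij : i ≠ j) (hik : i ≠ k) (hjk : j ≠ k) :
    2 * γ {i, j, k} ≥ γ {i, j} + γ {i, k} + γ {j, k} :=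
  pmas_triangle_inequality_general γ hpmas i j k hij hik hjk
end

section
/- Let Γ = (N, γ) be a cooperative game admitting a PMAS. Then for any four distinct players 1, 2, 3, 4 ∈ N, we have γ({1,2,3}) + γ({2,3,4}) ≥ γ({1,2}) + γ({2,3}) + γ({3,4}). -/
/-! Each of `{1,2,3}` and `{2,3,4}` splits into a two-player coalition and one player of
`{2,3}`; population monotonicity lets both pieces be paid at most what they get in the smaller
coalitions, and the two singleton payoffs of `{2,3}` add up to `γ {2,3}`. -/

open Finset

namespace IsPMAS

variable {N : Type*} [DecidableEq N] {γ : Finset N → ℝ} {x : Finset N → N → ℝ}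

theorem sum_le_sum_of_subset (hx : IsPMAS γ x) {A S T : Finset N} (hAS : A ⊆ S)
    (hST : S ⊆ T) : ∑ i ∈ A, x S i ≤ ∑ i ∈ A, x T i :=
  sum_le_sum fun i hi => hx.2 S T hST i (hAS hi)

theorem add_sum_sdiff_le (hx : IsPMAS γ x) {S T U : Finset N} (hS : S.Nonempty)
    (hST : S ⊆ T) (hU : T \ S ⊆ U) (hUT : U ⊆ T) :
    γ S + ∑ i ∈ T \ S, x U i ≤ γ T :=
  calc γ S + ∑ i ∈ T \ S, x U i
      = ∑ i ∈ S, x S i + ∑ i ∈ T \ S, x U i := by rw [hx.1 S hS]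
    _ ≤ ∑ i ∈ S, x T i + ∑ i ∈ T \ S, x T i :=
        add_le_add (hx.sum_le_sum_of_subset subset_rfl hST)
          (hx.sum_le_sum_of_subset hU hUT)
    _ = γ T := by rw [add_comm, sum_sdiff hST, hx.1 T (hS.mono hST)]

end IsPMAS

theorem pmas_four_player_cover_inequality_general {N : Type*} [DecidableEq N]
    (γ : Finset N → ℝ)
    (hpmas : ∃ x : Finset N → N → ℝ, IsPMAS γ x)
    (v1 v2 v3 v4 : N)
    (h13 : v1 ≠ v3)
    (h23 : v2 ≠ v3) (h24 : v2 ≠ v4) :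
    γ {v1, v2, v3} + γ {v2, v3, v4} ≥ γ {v1, v2} + γ {v2, v3} + γ {v3, v4} := by
  obtain ⟨x, hx⟩ := hpmas
  have hleft : ({v1, v2, v3} \ {v1, v2} : Finset N) = {v3} := by
    ext; grind
  have hright : ({v2, v3, v4} \ {v3, v4} : Finset N) = {v2} := by
    ext; grind
  have left : γ {v1, v2} + x {v2, v3} v3 ≤ γ {v1, v2, v3} := by
    simpa [hleft] using hx.add_sum_sdiff_le (S := {v1, v2}) (T := {v1, v2, v3})
      (U := {v2, v3}) (insert_nonempty _ _) (by simp) (by simp [hleft]) (by simp)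
  have right : γ {v3, v4} + x {v2, v3} v2 ≤ γ {v2, v3, v4} := by
    simpa [hright] using hx.add_sum_sdiff_le (S := {v3, v4}) (T := {v2, v3, v4})
      (U := {v2, v3}) (insert_nonempty _ _) (by simp) (by simp [hright]) (by simp)
  have middle : γ {v2, v3} = x {v2, v3} v2 + x {v2, v3} v3 := by
    rw [← hx.1 _ (insert_nonempty _ _), sum_pair h23]
  linarith

theorem pmas_four_player_cover_inequality {N : Type*} [Fintype N] [DecidableEq N]
    (γ : Finset N → ℝ) (hγ0 : γ ∅ = 0)
    (hpmas : ∃ x : Finset N → N → ℝ, IsPMAS γ x)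
    (v1 v2 v3 v4 : N)
    (h12 : v1 ≠ v2) (h13 : v1 ≠ v3) (h14 : v1 ≠ v4)
    (h23 : v2 ≠ v3) (h24 : v2 ≠ v4) (h34 : v3 ≠ v4) :
    γ {v1, v2, v3} + γ {v2, v3, v4} ≥ γ {v1, v2} + γ {v2, v3} + γ {v3, v4} :=
  pmas_four_player_cover_inequality_general γ hpmas v1 v2 v3 v4 h13 h23 h24
end

section
/- Let G = (V, E; w) be a graph with strictly positive edge weights, and let Γ_G be the matching game on G. Suppose vertices 1, 2, 3 induce a triangle in G with w_{12} ≤ w_{13} ≤ w_{23}. If Γ_G admits a PMAS, then w_{23} ≥ w_{12} + w_{13}. -/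
/-!
In a PMAS every player's payoff in the triangle `T = {1, 2, 3}` dominates its payoffs in the two
pairs containing it. Summing these six inequalities and using efficiency in each coalition gives
`γ {1, 2} + γ {1, 3} + γ {2, 3} ≤ 2 γ T`. A matching inside three vertices has at most one edge,
so `γ T = w₂₃`, while `γ {i, j} ≥ wᵢⱼ`; hence `w₁₂ + w₁₃ + w₂₃ ≤ 2 w₂₃`.
-/

open Finset

/-- `M` is a matching of the induced subgraph `G[S]`, given as a finite set of
(ordered representatives of) edges with endpoints in `S`, pairwise vertex-disjoint. -/
def IsMatchingIn {V : Type*} (G : SimpleGraph V) (S : Finset V)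
    (M : Finset (V × V)) : Prop :=
  (∀ p ∈ M, G.Adj p.1 p.2 ∧ p.1 ∈ S ∧ p.2 ∈ S) ∧
  (∀ p ∈ M, ∀ q ∈ M, p ≠ q →
    p.1 ≠ q.1 ∧ p.1 ≠ q.2 ∧ p.2 ≠ q.1 ∧ p.2 ≠ q.2)

/-- `r` is the maximum total weight of a matching in the induced subgraph `G[S]`. -/
def IsMaxMatchingWeight {V : Type*} (G : SimpleGraph V)
    (w : V → V → ℝ) (S : Finset V) (r : ℝ) : Prop :=
  (∃ M : Finset (V × V), IsMatchingIn G S M ∧ ∑ p ∈ M, w p.1 p.2 = r) ∧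
  (∀ M : Finset (V × V), IsMatchingIn G S M → ∑ p ∈ M, w p.1 p.2 ≤ r)

namespace IsMatchingIn

variable {V : Type*} [DecidableEq V] {G : SimpleGraph V} {S : Finset V} {M : Finset (V × V)}

theorem two_mul_card_le (hM : IsMatchingIn G S M) : 2 * M.card ≤ S.card := by
  have hends : ∀ p ∈ M, ({p.1, p.2} : Finset V).card = 2 := fun p hp =>
    Finset.card_pair (hM.1 p hp).1.ne
  have hdisj : (M : Set (V × V)).PairwiseDisjoint fun p => ({p.1, p.2} : Finset V) := by
    intro p hp q hq hpq
    obtain ⟨h11, h12, h21, h22⟩ := hM.2 p hp q hq hpq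
    simp [Finset.disjoint_left, *]
  calc 2 * M.card = (M.biUnion fun p => ({p.1, p.2} : Finset V)).card := by
        rw [Finset.card_biUnion hdisj, Finset.sum_congr rfl hends, Finset.sum_const, smul_eq_mul,
          mul_comm]
    _ ≤ S.card := Finset.card_le_card <| Finset.biUnion_subset.mpr fun p hp => by
        obtain ⟨-, h1, h2⟩ := hM.1 p hp
        simp [Finset.insert_subset_iff, h1, h2]

theorem card_le_one (hM : IsMatchingIn G S M) (hS : S.card ≤ 3) : M.card ≤ 1 := by
  have := hM.two_mul_card_le
  omega

end IsMatchingIn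

namespace IsMaxMatchingWeight

variable {V : Type*} {G : SimpleGraph V} {w : V → V → ℝ} {S : Finset V} {r : ℝ}

theorem weight_le (hr : IsMaxMatchingWeight G w S r) {a b : V} (hab : G.Adj a b) (ha : a ∈ S)
    (hb : b ∈ S) : w a b ≤ r := by
  simpa using hr.2 {(a, b)} ⟨by simp [hab, ha, hb], by simp⟩

theorem le_of_card_le_three [DecidableEq V] (hr : IsMaxMatchingWeight G w S r)
    (hS : S.card ≤ 3) {m : ℝ} (hm : 0 ≤ m) (hedge : ∀ a ∈ S, ∀ b ∈ S, G.Adj a b → w a b ≤ m) : r ≤ m := by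
  obtain ⟨M, hM, rfl⟩ := hr.1
  calc ∑ p ∈ M, w p.1 p.2 ≤ M.card • m :=
        Finset.sum_le_card_nsmul _ _ _ fun p hp =>
          have ⟨hadj, h1, h2⟩ := hM.1 p hp
          hedge _ h1 _ h2 hadj
    _ ≤ 1 • m := nsmul_le_nsmul_left hm (hM.card_le_one hS)
    _ = m := one_nsmul m

end IsMaxMatchingWeight

theorem weight_le_of_mem_triple {V : Type*} {w : V → V → ℝ} (hsym : ∀ a b, w a b = w b a)
    {u v t : V} {m : ℝ} (huv : w u v ≤ m) (hut : w u t ≤ m) (hvt : w v t ≤ m) {a b : V}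
    (ha : a ∈ ({u, v, t} : Set V)) (hb : b ∈ ({u, v, t} : Set V)) (hab : a ≠ b) : w a b ≤ m := by
  rcases ha with rfl | rfl | rfl <;> rcases hb with rfl | rfl | rfl <;>
    first | exact absurd rfl hab | linarith [hsym a b]

theorem IsPMAS.pair_values_le_two_mul {N : Type*} [DecidableEq N] {γ : Finset N → ℝ}
    {x : Finset N → N → ℝ} (hx : IsPMAS γ x) {i j k : N} (hij : i ≠ j) (hik : i ≠ k)
    (hjk : j ≠ k) : γ {i, j} + γ {i, k} + γ {j, k} ≤ 2 * γ {i, j, k} := by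
  obtain ⟨heff, hmono⟩ := hx
  set T : Finset N := {i, j, k}
  have pair_le : ∀ {a b : N}, a ≠ b → {a, b} ⊆ T → γ {a, b} ≤ x T a + x T b := fun hab hsub => by
    rw [← heff _ (Finset.insert_nonempty _ _), Finset.sum_pair hab]
    exact add_le_add (hmono _ _ hsub _ (by simp)) (hmono _ _ hsub _ (by simp))
  have eff_T : γ T = x T i + x T j + x T k := by
    rw [← heff _ (Finset.insert_nonempty _ _), Finset.sum_insert (by simp [hij, hik]),
      Finset.sum_pair hjk, add_assoc]
  linarith [pair_le hij (by simp [T]), pair_le hik (by simp [T]), pair_le hjk (by simp [T])]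

theorem matchingGame_K3_property_general {V : Type*} [DecidableEq V]
    (G : SimpleGraph V) (w : V → V → ℝ)
    (hsym : ∀ a b : V, w a b = w b a)
    (hpos : ∀ a b : V, G.Adj a b → 0 < w a b)
    (γ : Finset V → ℝ)
    (hγ : ∀ S : Finset V, IsMaxMatchingWeight G w S (γ S))
    (hpmas : ∃ x : Finset V → V → ℝ, IsPMAS γ x)
    (v1 v2 v3 : V)
    (h12 : G.Adj v1 v2) (h13 : G.Adj v1 v3) (h23 : G.Adj v2 v3)
    (hw1 : w v1 v2 ≤ w v1 v3) (hw2 : w v1 v3 ≤ w v2 v3) :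
    w v2 v3 ≥ w v1 v2 + w v1 v3 := by
  obtain ⟨x, hx⟩ := hpmas
  have hpairs := hx.pair_values_le_two_mul h12.ne h13.ne h23.ne
  have hγ12 := (hγ {v1, v2}).weight_le h12 (by simp) (by simp)
  have hγ13 := (hγ {v1, v3}).weight_le h13 (by simp) (by simp)
  have hγ23 := (hγ {v2, v3}).weight_le h23 (by simp) (by simp)
  have hγT : γ {v1, v2, v3} ≤ w v2 v3 :=
    (hγ _).le_of_card_le_three Finset.card_le_three (hpos _ _ h23).le fun a ha b hb hab =>
      weight_le_of_mem_triple hsym (hw1.trans hw2) hw2 le_rfl (by simpa using ha)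
        (by simpa using hb) hab.ne
  linarith

/-- K₃-property (Lemma 3.1). -/
theorem matchingGame_K3_property {V : Type*} [Fintype V] [DecidableEq V]
    (G : SimpleGraph V) (w : V → V → ℝ)
    (hsym : ∀ a b : V, w a b = w b a)
    (hpos : ∀ a b : V, G.Adj a b → 0 < w a b)
    (γ : Finset V → ℝ)
    (hγ : ∀ S : Finset V, IsMaxMatchingWeight G w S (γ S))
    (hpmas : ∃ x : Finset V → V → ℝ, IsPMAS γ x)
    (v1 v2 v3 : V)
    (h12 : G.Adj v1 v2) (h13 : G.Adj v1 v3) (h23 : G.Adj v2 v3)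
    (hw1 : w v1 v2 ≤ w v1 v3) (hw2 : w v1 v3 ≤ w v2 v3) :
    w v2 v3 ≥ w v1 v2 + w v1 v3 :=
  matchingGame_K3_property_general G w hsym hpos γ hγ hpmas v1 v2 v3 h12 h13 h23 hw1 hw2
end

section
/- Let G = (V, E; w) be a graph with strictly positive edge weights whose matching game Γ_G admits a PMAS. Suppose vertices 1, 2, 3, 4 are distinct, the induced subgraph on {1,2,3} has edge set exactly {12, 13, 23}, the induced subgraph on {2,3,4} has edge set exactly {23, 24, 34}, and w_{12} ≥ max{w_{13}, w_{23}}. Then w_{24} ≥ w_{23} + w_{34}. -/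
open Finset

/-!
In the triangle `{1, 2, 3}` a maximum matching is a single edge, so `γ {1, 2, 3} ≤ w₁₂`.
Since players 1 and 2 already share `γ {1, 2} ≥ w₁₂` in the coalition `{1, 2}`,
monotonicity leaves player 3 a payoff `≤ 0` in `{1, 2, 3}`, hence also in `{2, 3}`, so
player 2 gets at least `w₂₃` there. Monotonicity then gives
`γ {2, 3, 4} ≥ w₂₃ + w₃₄`, which, the triangle `{2, 3, 4}` having a single-edge maximum
matching and the weights being positive, forces `w₂₄ ≥ w₂₃ + w₃₄`.
-/

section Matching

variable {V : Type*} {G : SimpleGraph V} {w : V → V → ℝ} {S : Finset V}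

theorem IsMatchingIn.two_mul_card_le_s5 [DecidableEq V] {M : Finset (V × V)}
    (hM : IsMatchingIn G S M) : 2 * #M ≤ #S := by
  have hdisj : (M : Set (V × V)).PairwiseDisjoint fun p ↦ ({p.1, p.2} : Finset V) := by
    intro p hp q hq hpq
    obtain ⟨h11, h12, h21, h22⟩ := hM.2 p hp q hq hpq
    simp [h11.symm, h12.symm, h21.symm, h22.symm]
  have hsub : M.biUnion (fun p ↦ ({p.1, p.2} : Finset V)) ⊆ S := by
    simp only [biUnion_subset, insert_subset_iff, singleton_subset_iff]
    exact fun p hp ↦ (hM.1 p hp).2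
  calc 2 * #M = ∑ p ∈ M, #({p.1, p.2} : Finset V) := by
        rw [sum_congr rfl fun p hp ↦ card_pair (hM.1 p hp).1.ne, sum_const, smul_eq_mul,
          mul_comm]
    _ = #(M.biUnion fun p ↦ ({p.1, p.2} : Finset V)) := (card_biUnion hdisj).symm
    _ ≤ #S := card_le_card hsub

theorem IsMaxMatchingWeight.le_of_adj {r : ℝ} (h : IsMaxMatchingWeight G w S r) {a b : V}
    (hab : G.Adj a b) (ha : a ∈ S) (hb : b ∈ S) : w a b ≤ r := by
  have hM : IsMatchingIn G S {(a, b)} :=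
    ⟨by simp [hab, ha, hb], fun p hp q hq hpq ↦ absurd ((mem_singleton.1 hp).trans
      (mem_singleton.1 hq).symm) hpq⟩
  simpa using h.2 _ hM

theorem IsMaxMatchingWeight.eq_zero_or_eq_of_card_le_three [DecidableEq V] {r : ℝ}
    (h : IsMaxMatchingWeight G w S r) (hS : #S ≤ 3) :
    r = 0 ∨ ∃ a ∈ S, ∃ b ∈ S, G.Adj a b ∧ r = w a b := by
  obtain ⟨M, hM, rfl⟩ := h.1
  have hcard : #M ≤ 1 := by have := hM.two_mul_card_le_s5; omega
  rcases M.eq_empty_or_nonempty with rfl | ⟨p, hp⟩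
  · exact Or.inl sum_empty
  · rw [eq_singleton_iff_unique_mem.2 ⟨hp, fun q hq ↦ card_le_one.1 hcard q hq p hp⟩,
      sum_singleton]
    obtain ⟨hadj, h1, h2⟩ := hM.1 p hp
    exact Or.inr ⟨p.1, h1, p.2, h2, hadj, rfl⟩

theorem IsMaxMatchingWeight.le_max_of_triangle [DecidableEq V] {r : ℝ}
    (hsym : ∀ a b : V, w a b = w b a) {a b c : V}
    (h : IsMaxMatchingWeight G w {a, b, c} r) :
    r ≤ max 0 (max (w a b) (max (w a c) (w b c))) := by
  rcases h.eq_zero_or_eq_of_card_le_three card_le_three with rfl | ⟨p, hp, q, hq, hpq, rfl⟩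
  · exact le_max_left _ _
  · simp only [mem_insert, mem_singleton] at hp hq
    rcases hp with hp | hp | hp <;> rcases hq with hq | hq | hq <;> rw [hp, hq] at hpq ⊢ <;>
      first
      | exact absurd rfl hpq.ne
      | simp [hsym b a, hsym c a, hsym c b]

end Matching

theorem IsPMAS.apply_insert_add_le {N : Type*} [DecidableEq N] {γ : Finset N → ℝ}
    {x : Finset N → N → ℝ} (hx : IsPMAS γ x) {i : N} {S : Finset N} (hi : i ∉ S)
    (hS : S.Nonempty) : x (insert i S) i + γ S ≤ γ (insert i S) :=
  calc x (insert i S) i + γ S = x (insert i S) i + ∑ j ∈ S, x S j := by rw [hx.1 S hS]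
    _ ≤ x (insert i S) i + ∑ j ∈ S, x (insert i S) j := by
        gcongr with j hj
        exact hx.2 _ _ (subset_insert i S) j hj
    _ = γ (insert i S) := by rw [← sum_insert hi, hx.1 _ (insert_nonempty i S)]

theorem matchingGame_two_K3_cover_general {V : Type*} [DecidableEq V]
    (G : SimpleGraph V) (w : V → V → ℝ)
    (hsym : ∀ a b : V, w a b = w b a)
    (hpos : ∀ a b : V, G.Adj a b → 0 < w a b)
    (γ : Finset V → ℝ)
    (hγ : ∀ S : Finset V, IsMaxMatchingWeight G w S (γ S))
    (hpmas : ∃ x : Finset V → V → ℝ, IsPMAS γ x)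
    (v1 v2 v3 v4 : V)
    (hne13 : v1 ≠ v3)
    (hne23 : v2 ≠ v3) (hne24 : v2 ≠ v4)
    (h12 : G.Adj v1 v2) (h23 : G.Adj v2 v3)
    (h34 : G.Adj v3 v4)
    (hw : w v1 v2 ≥ max (w v1 v3) (w v2 v3)) :
    w v2 v4 ≥ w v2 v3 + w v3 v4 := by
  obtain ⟨x, hx⟩ := hpmas
  have hγ123 : γ {v3, v1, v2} ≤ w v1 v2 := by
    refine ((hγ _).le_max_of_triangle hsym).trans
      (max_le (hpos _ _ h12).le (max_le ?_ (max_le ?_ le_rfl)))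
    · exact hsym v3 v1 ▸ (le_max_left _ _).trans hw
    · exact hsym v3 v2 ▸ (le_max_right _ _).trans hw
  have hx3 : x {v3, v1, v2} v3 ≤ 0 := by
    have hmarg := hx.apply_insert_add_le (i := v3) (S := {v1, v2})
      (by simp [hne13.symm, hne23.symm]) (insert_nonempty _ _)
    have hγ12 := (hγ {v1, v2}).le_of_adj h12 (by simp) (by simp)
    linarith
  have hx2 : w v2 v3 ≤ x {v2, v3} v2 := by
    have heff := hx.1 {v2, v3} (insert_nonempty _ _)
    rw [sum_pair hne23] at heff
    have hmono := hx.2 {v2, v3} {v3, v1, v2} (by simp [insert_subset_iff]) v3 (by simp)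
    have hγ23 := (hγ {v2, v3}).le_of_adj h23 (by simp) (by simp)
    linarith
  have hγ234 : w v2 v3 + w v3 v4 ≤ γ {v2, v3, v4} := by
    have hmarg := hx.apply_insert_add_le (i := v2) (S := {v3, v4})
      (by simp [hne23, hne24]) (insert_nonempty _ _)
    have hmono := hx.2 {v2, v3} {v2, v3, v4} (by simp [insert_subset_iff]) v2 (by simp)
    have hγ34 := (hγ {v3, v4}).le_of_adj h34 (by simp) (by simp)
    linarith
  have htri := (hγ {v2, v3, v4}).le_max_of_triangle hsym
  have hw23 := hpos _ _ h23
  have hw34 := hpos _ _ h34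
  simp only [le_max_iff] at htri
  rcases htri with h | h | h | h <;> linarith

/-- 2K₃-cover (Lemma 3.2 (iii)). -/
theorem matchingGame_two_K3_cover {V : Type*} [Fintype V] [DecidableEq V]
    (G : SimpleGraph V) (w : V → V → ℝ)
    (hsym : ∀ a b : V, w a b = w b a)
    (hpos : ∀ a b : V, G.Adj a b → 0 < w a b)
    (γ : Finset V → ℝ)
    (hγ : ∀ S : Finset V, IsMaxMatchingWeight G w S (γ S))
    (hpmas : ∃ x : Finset V → V → ℝ, IsPMAS γ x)
    (v1 v2 v3 v4 : V)
    (hne12 : v1 ≠ v2) (hne13 : v1 ≠ v3) (hne14 : v1 ≠ v4)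
    (hne23 : v2 ≠ v3) (hne24 : v2 ≠ v4) (hne34 : v3 ≠ v4)
    (h12 : G.Adj v1 v2) (h13 : G.Adj v1 v3) (h23 : G.Adj v2 v3)
    (h24 : G.Adj v2 v4) (h34 : G.Adj v3 v4)
    (hw : w v1 v2 ≥ max (w v1 v3) (w v2 v3)) :
    w v2 v4 ≥ w v2 v3 + w v3 v4 :=
  matchingGame_two_K3_cover_general G w hsym hpos γ hγ hpmas v1 v2 v3 v4 hne13 hne23 hne24 h12 h23
    h34 hw
end

section
/- Let G be a connected, finite simple graph on at least two vertices that has no induced subgraph isomorphic to P_4 (path on 4 vertices), C_4, K_4, or the paw (triangle with a pendant edge). Then G is a double-star: there exist adjacent vertices u and v such that V \ {u, v} is an independent set and every vertex of V \ {u, v} is adjacent only to u and/or v. -/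
/-!
Take an edge `uv`. Forbidding the paw, `P₄` and `C₄` makes the set of vertices equal or adjacent
to `u` or `v` closed under adjacency, so by connectivity every vertex sees `u` or `v`. If `u` and
`v` have no common neighbour, an edge outside `{u, v}` would again create a paw, `P₄` or `C₄`.
Otherwise `u, v` lie on a triangle, every further vertex sees exactly two corners of it (no paw,
no `K₄`), and two such vertices cannot see different pairs (that would be a `P₄` or `C₄`); the
pair they see is the pair of centres.
-/

namespace SimpleGraph

variable {V : Type*} (G : SimpleGraph V)

def InducedP4Free : Prop :=
  ¬ ∃ a b c d : V,
    a ≠ b ∧ a ≠ c ∧ a ≠ d ∧ b ≠ c ∧ b ≠ d ∧ c ≠ d ∧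
    G.Adj a b ∧ G.Adj b c ∧ G.Adj c d ∧ ¬ G.Adj a c ∧ ¬ G.Adj a d ∧ ¬ G.Adj b d

def InducedC4Free : Prop :=
  ¬ ∃ a b c d : V,
    a ≠ b ∧ a ≠ c ∧ a ≠ d ∧ b ≠ c ∧ b ≠ d ∧ c ≠ d ∧
    G.Adj a b ∧ G.Adj b c ∧ G.Adj c d ∧ G.Adj a d ∧ ¬ G.Adj a c ∧ ¬ G.Adj b d

def InducedK4Free : Prop :=
  ¬ ∃ a b c d : V,
    a ≠ b ∧ a ≠ c ∧ a ≠ d ∧ b ≠ c ∧ b ≠ d ∧ c ≠ d ∧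
    G.Adj a b ∧ G.Adj a c ∧ G.Adj a d ∧ G.Adj b c ∧ G.Adj b d ∧ G.Adj c d

def InducedPawFree : Prop :=
  ¬ ∃ a b c d : V,
    a ≠ b ∧ a ≠ c ∧ a ≠ d ∧ b ≠ c ∧ b ≠ d ∧ c ≠ d ∧
    G.Adj a b ∧ G.Adj b c ∧ G.Adj b d ∧ G.Adj c d ∧ ¬ G.Adj a c ∧ ¬ G.Adj a d

def IsDoubleStarWithCenters (u v : V) : Prop :=
  G.Adj u v ∧
    (∀ z : V, z ≠ u → z ≠ v → (G.Adj z u ∨ G.Adj z v)) ∧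
    (∀ z z' : V, z ≠ u → z ≠ v → z' ≠ u → z' ≠ v → ¬ G.Adj z z')

variable {G} {a b c d u v w x y z : V}

theorem adj_or_adj_of_path3 (hP4 : G.InducedP4Free) (hC4 : G.InducedC4Free)
    (hac : a ≠ c) (hbd : b ≠ d) (had : a ≠ d) (hab : G.Adj a b) (hbc : G.Adj b c)
    (hcd : G.Adj c d) : G.Adj a c ∨ G.Adj b d := by
  by_contra! ⟨hac', hbd'⟩
  by_cases had' : G.Adj a d
  · exact hC4 ⟨a, b, c, d, hab.ne, hac, had, hbc.ne, hbd, hcd.ne,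
      hab, hbc, hcd, had', hac', hbd'⟩
  · exact hP4 ⟨a, b, c, d, hab.ne, hac, had, hbc.ne, hbd, hcd.ne,
      hab, hbc, hcd, hac', had', hbd'⟩

theorem InducedPawFree.adj_or_adj (hPaw : G.InducedPawFree) (hab : G.Adj a b)
    (hbc : G.Adj b c) (hbd : G.Adj b d) (hcd : G.Adj c d) : G.Adj a c ∨ G.Adj a d := by
  by_contra! ⟨hac, had⟩
  have hac' : a ≠ c := fun h => had (h ▸ hcd)
  have had' : a ≠ d := fun h => hac (h ▸ hcd.symm)
  exact hPaw ⟨a, b, c, d, hab.ne, hac', had', hbc.ne, hbd.ne, hcd.ne,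
    hab, hbc, hbd, hcd, hac, had⟩

theorem InducedK4Free.not_adj (hK4 : G.InducedK4Free) (hab : G.Adj a b) (hac : G.Adj a c)
    (hbc : G.Adj b c) (hxa : G.Adj x a) (hxb : G.Adj x b) : ¬ G.Adj x c := fun hxc =>
  hK4 ⟨x, a, b, c, hxa.ne, hxb.ne, hxc.ne, hab.ne, hac.ne, hbc.ne,
    hxa, hxb, hxc, hab, hac, hbc⟩

theorem adj_or_adj_of_adj_of_adj (hP4 : G.InducedP4Free) (hC4 : G.InducedC4Free)
    (hPaw : G.InducedPawFree) (huv : G.Adj u v) (hyu : G.Adj y u) (hyv : y ≠ v)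
    (hzy : G.Adj z y) (hzu : z ≠ u) (hzv : z ≠ v) : G.Adj z u ∨ G.Adj z v := by
  by_cases hyv' : G.Adj y v
  · exact hPaw.adj_or_adj hzy hyu hyv' huv
  · exact .inl ((adj_or_adj_of_path3 hP4 hC4 hzu hyv hzv hzy hyu huv).resolve_right hyv')

theorem Connected.adj_or_adj_of_adj (hconn : G.Connected) (hP4 : G.InducedP4Free)
    (hC4 : G.InducedC4Free) (hPaw : G.InducedPawFree) (huv : G.Adj u v) (z : V)
    (hzu : z ≠ u) (hzv : z ≠ v) : G.Adj z u ∨ G.Adj z v := by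
  have hreach : Relation.ReflTransGen G.Adj u z :=
    reachable_eq_reflTransGen (G := G) ▸ hconn.preconnected u z
  induction hreach with
  | refl => exact absurd rfl hzu
  | @tail y z _ hyz ih =>
    by_cases hyu : y = u
    · exact .inl (hyu ▸ hyz.symm)
    by_cases hyv : y = v
    · exact .inr (hyv ▸ hyz.symm)
    rcases ih hyu hyv with hyu' | hyv'
    · exact adj_or_adj_of_adj_of_adj hP4 hC4 hPaw huv hyu' hyv hyz.symm hzu hzv
    · exact (adj_or_adj_of_adj_of_adj hP4 hC4 hPaw huv.symm hyv' hyu hyz.symm hzv hzu).symm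

theorem isDoubleStarWithCenters_of_forall_not_adj (hP4 : G.InducedP4Free)
    (hC4 : G.InducedC4Free) (hPaw : G.InducedPawFree) (huv : G.Adj u v)
    (hcover : ∀ z, z ≠ u → z ≠ v → G.Adj z u ∨ G.Adj z v)
    (hnc : ∀ w, G.Adj w u → ¬ G.Adj w v) : G.IsDoubleStarWithCenters u v := by
  refine ⟨huv, hcover, fun z z' hzu hzv hz'u hz'v hzz' => ?_⟩
  rcases hcover z hzu hzv with hz | hz <;> rcases hcover z' hz'u hz'v with hz' | hz'
  · rcases hPaw.adj_or_adj huv.symm hz.symm hz'.symm hzz' with h | h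
    · exact hnc z hz h.symm
    · exact hnc z' hz' h.symm
  · rcases adj_or_adj_of_path3 hP4 hC4 hzv hz'u.symm hzz'.ne hz huv hz'.symm with h | h
    · exact hnc z hz h
    · exact hnc z' h.symm hz'
  · rcases adj_or_adj_of_path3 hP4 hC4 hz'v hzu.symm hzz'.ne.symm hz' huv hz.symm with h | h
    · exact hnc z' hz' h
    · exact hnc z h.symm hz
  · rcases hPaw.adj_or_adj huv hz.symm hz'.symm hzz' with h | h
    · exact hnc z h.symm hz
    · exact hnc z' h.symm hz'

theorem isDoubleStarWithCenters_of_triangle (hP4 : G.InducedP4Free) (hC4 : G.InducedC4Free)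
    (hK4 : G.InducedK4Free) (hPaw : G.InducedPawFree)
    (hcover : ∀ z, z ≠ a → z ≠ b → G.Adj z a ∨ G.Adj z b)
    (hab : G.Adj a b) (hac : G.Adj a c) (hbc : G.Adj b c)
    (hxa : G.Adj x a) (hxb : G.Adj x b) (hxc : x ≠ c) : G.IsDoubleStarWithCenters a b := by
  have hxc' : ¬ G.Adj x c := hK4.not_adj hab hac hbc hxa hxb
  -- `y` and `x` would see different sides of the edge `ac` (or `bc`): a `P₄` or `C₄`
  have hnot_adj_c : ∀ y, y ≠ a → y ≠ b → ¬ G.Adj y c := by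
    intro y hya hyb hyc
    have hxy : x ≠ y := fun h => hxc' (h ▸ hyc)
    by_cases hya' : G.Adj y a
    · have hyb' : ¬ G.Adj y b := hK4.not_adj hac hab hbc.symm hya' hyc
      exact (adj_or_adj_of_path3 hP4 hC4 hxc hyb.symm hxy hxb hbc hyc.symm).elim hxc'
        fun h => hyb' h.symm
    · exact (adj_or_adj_of_path3 hP4 hC4 hxc hya.symm hxy hxa hac hyc.symm).elim hxc'
        fun h => hya' h.symm
  have hadj_ab : ∀ y, y ≠ a → y ≠ b → y ≠ c → G.Adj y a ∧ G.Adj y b := by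
    intro y hya hyb hyc
    have hyc' := hnot_adj_c y hya hyb
    rcases hcover y hya hyb with hya' | hyb'
    · exact ⟨hya', (hPaw.adj_or_adj hya' hab hac hbc).resolve_right hyc'⟩
    · exact ⟨(hPaw.adj_or_adj hyb' hab.symm hbc hac).resolve_right hyc', hyb'⟩
  refine ⟨hab, hcover, fun z z' hza hzb hz'a hz'b hzz' => ?_⟩
  by_cases hzc : z = c
  · exact hnot_adj_c z' hz'a hz'b (hzc ▸ hzz'.symm)
  by_cases hz'c : z' = c
  · exact hnot_adj_c z hza hzb (hz'c ▸ hzz')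
  obtain ⟨hza', hzb'⟩ := hadj_ab z hza hzb hzc
  obtain ⟨hz'a', hz'b'⟩ := hadj_ab z' hz'a hz'b hz'c
  exact hK4.not_adj hab hza'.symm hzb'.symm hz'a' hz'b' hzz'.symm

theorem Connected.exists_isDoubleStarWithCenters_of_triangle (hconn : G.Connected)
    (hP4 : G.InducedP4Free) (hC4 : G.InducedC4Free) (hK4 : G.InducedK4Free)
    (hPaw : G.InducedPawFree) (huv : G.Adj u v) (hwu : G.Adj w u) (hwv : G.Adj w v) :
    ∃ a b, G.IsDoubleStarWithCenters a b := by
  have hcover {a b : V} (hab : G.Adj a b) := hconn.adj_or_adj_of_adj hP4 hC4 hPaw hab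
  by_cases hx : ∃ x, x ≠ u ∧ x ≠ v ∧ x ≠ w
  · obtain ⟨x, hxu, hxv, hxw⟩ := hx
    rcases hcover huv x hxu hxv with hxu' | hxv'
    · rcases hPaw.adj_or_adj hxu' huv hwu.symm hwv.symm with hxv' | hxw'
      · exact ⟨u, v, isDoubleStarWithCenters_of_triangle hP4 hC4 hK4 hPaw (hcover huv)
          huv hwu.symm hwv.symm hxu' hxv' hxw⟩
      · exact ⟨u, w, isDoubleStarWithCenters_of_triangle hP4 hC4 hK4 hPaw (hcover hwu.symm)
          hwu.symm huv hwv hxu' hxw' hxv⟩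
    · rcases hPaw.adj_or_adj hxv' huv.symm hwv.symm hwu.symm with hxu' | hxw'
      · exact ⟨v, u, isDoubleStarWithCenters_of_triangle hP4 hC4 hK4 hPaw (hcover huv.symm)
          huv.symm hwv.symm hwu.symm hxv' hxu' hxw⟩
      · exact ⟨v, w, isDoubleStarWithCenters_of_triangle hP4 hC4 hK4 hPaw (hcover hwv.symm)
          hwv.symm huv.symm hwu hxv' hxw' hxu⟩
  · push Not at hx
    refine ⟨u, v, huv, hcover huv, fun z z' hzu hzv hz'u hz'v hzz' => ?_⟩
    rw [hx z hzu hzv, hx z' hz'u hz'v] at hzz'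
    exact hzz'.ne rfl

end SimpleGraph

open SimpleGraph

/-- A connected graph on at least two vertices with no induced P₄, C₄, K₄ or paw is a
double-star. -/
theorem doubleStar_of_forbidden_subgraphs {V : Type*} [Fintype V]
    (G : SimpleGraph V) (hconn : G.Connected) (hcard : 2 ≤ Fintype.card V)
    (hP4 : ¬ ∃ a b c d : V,
      a ≠ b ∧ a ≠ c ∧ a ≠ d ∧ b ≠ c ∧ b ≠ d ∧ c ≠ d ∧
      G.Adj a b ∧ G.Adj b c ∧ G.Adj c d ∧ ¬ G.Adj a c ∧ ¬ G.Adj a d ∧ ¬ G.Adj b d)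
    (hC4 : ¬ ∃ a b c d : V,
      a ≠ b ∧ a ≠ c ∧ a ≠ d ∧ b ≠ c ∧ b ≠ d ∧ c ≠ d ∧
      G.Adj a b ∧ G.Adj b c ∧ G.Adj c d ∧ G.Adj a d ∧ ¬ G.Adj a c ∧ ¬ G.Adj b d)
    (hK4 : ¬ ∃ a b c d : V,
      a ≠ b ∧ a ≠ c ∧ a ≠ d ∧ b ≠ c ∧ b ≠ d ∧ c ≠ d ∧
      G.Adj a b ∧ G.Adj a c ∧ G.Adj a d ∧ G.Adj b c ∧ G.Adj b d ∧ G.Adj c d)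
    (hPaw : ¬ ∃ a b c d : V,
      a ≠ b ∧ a ≠ c ∧ a ≠ d ∧ b ≠ c ∧ b ≠ d ∧ c ≠ d ∧
      G.Adj a b ∧ G.Adj b c ∧ G.Adj b d ∧ G.Adj c d ∧ ¬ G.Adj a c ∧ ¬ G.Adj a d) :
    ∃ u v : V, G.Adj u v ∧
      (∀ z : V, z ≠ u → z ≠ v → (G.Adj z u ∨ G.Adj z v)) ∧
      (∀ z z' : V, z ≠ u → z ≠ v → z' ≠ u → z' ≠ v → ¬ G.Adj z z') := by
  obtain ⟨u, y, huy⟩ := Fintype.exists_pair_of_one_lt_card hcard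
  obtain ⟨v, huv⟩ := (hconn.preconnected u y).nonempty_neighborSet_left huy
  by_cases htri : ∃ w, G.Adj w u ∧ G.Adj w v
  · obtain ⟨w, hwu, hwv⟩ := htri
    exact hconn.exists_isDoubleStarWithCenters_of_triangle hP4 hC4 hK4 hPaw huv hwu hwv
  · push Not at htri
    exact ⟨u, v, isDoubleStarWithCenters_of_forall_not_adj hP4 hC4 hPaw huv
      (hconn.adj_or_adj_of_adj hP4 hC4 hPaw huv) htri⟩
end
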